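/- Let ⋆ be a semistar operation on an integral domain D. The following are equivalent: (i) D is a ((⋆̄)_f, ⋆_f)-domain [respectively: a (⋆̄, ⋆)-domain]; (ii) for all E, F ∈ f(D) [respectively: E, F ∈ F̄(D)], (E ∩ F)^⋆ = E^⋆ ∩ F^⋆; (iii) for all E, F ∈ f(D) [respectively: E ∈ F̄(D), F ∈ f(D)], (E :_D F)^⋆ = (E^⋆ :_{D^⋆} F); (iv) for each E ∈ f(D) [respectively: E ∈ F̄(D)] and each nonzero x ∈ K, (E :_D xD)^⋆ = (E^⋆ :_{D^⋆} xD). -/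

import Mathlib

open Submodule

namespace Semistar

/-- A semistar operation on an integral domain `D` with quotient field `K`:
a map on `D`-submodules of `K` satisfying the semistar axioms on nonzero submodules. -/
structure SemistarOp (D K : Type*) [CommRing D] [Field K] [Algebra D K] where
  star : Submodule D K → Submodule D K
  star_smul_mul : ∀ x : K, x ≠ 0 → ∀ E : Submodule D K, E ≠ ⊥ →
    star (span D {x} * E) = span D {x} * star E
  star_mono : ∀ E F : Submodule D K, E ≠ ⊥ → F ≠ ⊥ → E ≤ F → star E ≤ star F
  le_star : ∀ E : Submodule D K, E ≠ ⊥ → E ≤ star E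
  star_star : ∀ E : Submodule D K, E ≠ ⊥ → star (star E) = star E

variable {D K : Type*} [CommRing D] [Field K] [Algebra D K]

/-- The finite-type semistar operation `⋆_f` associated to `⋆`. -/
def finStar (t : Submodule D K → Submodule D K) : Submodule D K → Submodule D K :=
  fun E => ⨆ F ∈ {F : Submodule D K | F ≠ ⊥ ∧ F.FG ∧ F ≤ E}, t F

/-- The image in `K` of an ideal of `D`. -/
def idealToK (I : Ideal D) : Submodule D K :=
  Submodule.map (Algebra.linearMap D K) I

/-- `I` is a quasi-`⋆`-ideal: a nonzero ideal of `D` with `I^⋆ ∩ D = I`. -/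
def IsQuasiIdeal (t : Submodule D K → Submodule D K) (I : Ideal D) : Prop :=
  I ≠ ⊥ ∧ t (idealToK I) ⊓ 1 = idealToK I

/-- `M` is a quasi-`⋆`-maximal ideal: maximal among quasi-`⋆`-ideals. -/
def IsQuasiMaximal (t : Submodule D K → Submodule D K) (M : Ideal D) : Prop :=
  IsQuasiIdeal t M ∧ ∀ J : Ideal D, IsQuasiIdeal t J → M ≤ J → M = J

/-- The localization `E·D_M` of a submodule `E` of `K` at (the complement of) an ideal `M`. -/
def locAt (M : Ideal D) (E : Submodule D K) : Submodule D K where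
  carrier := {x : K | ∃ s ∈ Submonoid.closure ((M : Set D)ᶜ), s • x ∈ E}
  add_mem' := by
    rintro x y ⟨s, hs, hsx⟩ ⟨t, ht, hty⟩
    refine ⟨s * t, mul_mem hs ht, ?_⟩
    have h1 : (s * t) • x ∈ E := by rw [mul_comm, mul_smul]; exact E.smul_mem t hsx
    have h2 : (s * t) • y ∈ E := by rw [mul_smul]; exact E.smul_mem s hty
    rw [smul_add]; exact E.add_mem h1 h2
  zero_mem' := ⟨1, Submonoid.one_mem _, by simp⟩
  smul_mem' := by
    rintro c x ⟨s, hs, hsx⟩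
    exact ⟨s, hs, by rw [smul_comm]; exact E.smul_mem c hsx⟩

/-- The spectral semistar operation `⋆̃` associated to `⋆`, defined by
`E^⋆̃ = ⋂ { E·D_M : M quasi-`⋆_f`-maximal }`. -/
def tildeStar (s : SemistarOp D K) : Submodule D K → Submodule D K :=
  fun E => ⨅ M ∈ {M : Ideal D | IsQuasiMaximal (finStar s.star) M}, locAt M E

/-- The localizing system `F^⋆` of ideals `I` with `I^⋆ = D^⋆`. -/
def starLS (s : SemistarOp D K) : Set (Ideal D) :=
  {I : Ideal D | I ≠ ⊥ ∧ s.star (idealToK I) = s.star 1}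

/-- The stable semistar operation `⋆̄` associated to `⋆`:
`E^⋆̄ = ⋃ {(E : J) : J ∈ F^⋆}`. -/
def barStar (s : SemistarOp D K) : Submodule D K → Submodule D K :=
  fun E => ⨆ J ∈ starLS s, E / idealToK J

/-- `I` is `⋆`-invertible: `(I·I⁻¹)^⋆ = D^⋆`. -/
def IsStarInvertible (t : Submodule D K → Submodule D K) (I : Submodule D K) : Prop :=
  t (I * (1 / I)) = t 1

/-- `D` is a `⋆`-domain: every nonzero finitely generated `D`-submodule of `K`
is `⋆`-invertible. -/
def IsStarDomain (t : Submodule D K → Submodule D K) : Prop :=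
  ∀ I : Submodule D K, I ≠ ⊥ → I.FG → IsStarInvertible t I

/-- `D` is a Prüfer `⋆`-multiplication domain: every nonzero finitely generated
ideal of `D` is `⋆_f`-invertible. -/
def IsPMD (t : Submodule D K → Submodule D K) : Prop :=
  ∀ I : Submodule D K, I ≠ ⊥ → I.FG → I ≤ 1 → IsStarInvertible (finStar t) I

/-- `D` is a P⋆MD for the semistar operation `s`. -/
abbrev IsPStarMD (s : SemistarOp D K) : Prop := IsPMD s.star

/-- Equality of two semistar operations (as maps on nonzero submodules):
`D` is a `(∗₁, ∗₂)`-domain. -/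
def StarEq (t₁ t₂ : Submodule D K → Submodule D K) : Prop :=
  ∀ E : Submodule D K, E ≠ ⊥ → t₁ E = t₂ E

/-- `⋆` is a.b. -/
def IsAB (t : Submodule D K → Submodule D K) : Prop :=
  ∀ E : Submodule D K, E ≠ ⊥ → E.FG → ∀ F G : Submodule D K, F ≠ ⊥ → G ≠ ⊥ →
    t (E * F) ≤ t (E * G) → t F ≤ t G

/-- `⋆` is e.a.b. -/
def IsEAB (t : Submodule D K → Submodule D K) : Prop :=
  ∀ E F G : Submodule D K, E ≠ ⊥ → E.FG → F ≠ ⊥ → F.FG → G ≠ ⊥ → G.FG →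
    t (E * F) ≤ t (E * G) → t F ≤ t G

/-- `D` is quasi-`⋆`-integrally closed: `D^⋆ = ⋃ {(F^⋆ : F^⋆) : F ∈ f(D)}`. -/
def IsQuasiStarIntegrallyClosed (t : Submodule D K → Submodule D K) : Prop :=
  (t 1 : Set K) = ⋃ F ∈ {F : Submodule D K | F ≠ ⊥ ∧ F.FG}, ((t F / t F : Submodule D K) : Set K)

/-- The submodule `S` of `K` is integrally closed in `K`. -/
def IsIntegrallyClosedIn (S : Submodule D K) : Prop :=
  ∀ x : K, (∃ p : Polynomial K, p.Monic ∧ (∀ i, p.coeff i ∈ S) ∧ Polynomial.eval x p = 0) → x ∈ S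

/-- `D` is `⋆`-Noetherian: ACC on quasi-`⋆`-ideals. -/
def IsStarNoetherian (t : Submodule D K → Submodule D K) : Prop :=
  ∀ c : ℕ → Ideal D, (∀ n, IsQuasiIdeal t (c n)) → Monotone c →
    ∃ n, ∀ m, n ≤ m → c m = c n

/-- `D` is `⋆`-extracoherent. -/
def IsExtraCoherent (t : Submodule D K → Submodule D K) : Prop :=
  ∀ E F : Submodule D K, E ≠ ⊥ → E.FG → F ≠ ⊥ → F.FG → E ⊓ F ≠ ⊥ →
    ∃ J : Submodule D K, J ≠ ⊥ ∧ J.FG ∧ J ≤ E ⊓ F ∧ t J = t E ⊓ t F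

/-- `D` is truly `⋆`-coherent. -/
def IsTrulyCoherent (t : Submodule D K → Submodule D K) : Prop :=
  ∀ E F : Submodule D K, E ≠ ⊥ → E.FG → F ≠ ⊥ → F.FG → E ⊓ F ≠ ⊥ →
    ∃ J : Submodule D K, J ≠ ⊥ ∧ J.FG ∧ t J = t (E ⊓ F)

/-- `D` is `⋆`-coherent. -/
def IsCoherent (t : Submodule D K → Submodule D K) : Prop :=
  ∀ E F : Submodule D K, E ≠ ⊥ → E.FG → F ≠ ⊥ → F.FG → E ⊓ F ≠ ⊥ →
    ∃ J : Submodule D K, J ≠ ⊥ ∧ J.FG ∧ t J = t E ⊓ t F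

/-- `D` is `⋆`-quasi-coherent. -/
def IsQuasiCoherent (t : Submodule D K → Submodule D K) : Prop :=
  ∀ F : Submodule D K, F ≠ ⊥ → F.FG →
    ∃ G : Submodule D K, G ≠ ⊥ ∧ G.FG ∧ t ((1 : Submodule D K) / F) = t G

/-- `D` is an `H(⋆)`-domain. -/
def IsHDomain (t : Submodule D K → Submodule D K) : Prop :=
  ∀ I : Ideal D, I ≠ ⊥ → t (idealToK I) = t 1 →
    ∃ J : Ideal D, J ≠ ⊥ ∧ J.FG ∧ J ≤ I ∧ t (idealToK J) = t 1

/-- `D` is an `I(⋆)`-domain. -/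
def IsIDomain (s : SemistarOp D K) : Prop :=
  ∀ I : Submodule D K, I ≠ ⊥ → I.FG → I ≤ 1 →
    (IsStarInvertible s.star I ↔ IsStarInvertible (finStar s.star) I)

end Semistar

/-!
The stable operation `⋆̄` lies below `⋆` and commutes with finite intersections and with colons
by finitely generated modules; so if `⋆̄` and `⋆` agree, `⋆` inherits both properties.
Conversely, if `x ∈ E^⋆` is nonzero, the colon formula for `xD` gives `1 ∈ (E :_D xD)^⋆`, i.e.
the ideal `J = (E :_D xD)` lies in `F^⋆`, and `xJ ⊆ E` then puts `x` in `E^⋆̄`.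
-/

namespace Submodule

variable {R A : Type*} [CommSemiring R] [CommSemiring A] [Algebra R A]

theorem div_le_div_of_le_of_le {I I' J J' : Submodule R A} (hI : I ≤ I') (hJ : J' ≤ J) :
    I / J ≤ I' / J' :=
  fun _ hx y hy => hI (hx y (hJ hy))

theorem div_div_comm (I J L : Submodule R A) : I / J / L = I / L / J := by
  have key : ∀ J L : Submodule R A, I / J / L ≤ I / L / J := fun J L => by
    rw [Submodule.le_div_iff_mul_le, Submodule.le_div_iff_mul_le, mul_right_comm,
      ← Submodule.le_div_iff_mul_le, ← Submodule.le_div_iff_mul_le]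
  exact le_antisymm (key J L) (key L J)

theorem le_div_div_self (I J : Submodule R A) : J ≤ I / (I / J) := by
  rw [Submodule.le_div_iff_mul_le, mul_comm, ← Submodule.le_div_iff_mul_le]

theorem mem_div_span_singleton {I : Submodule R A} {x y : A} :
    x ∈ I / span R {y} ↔ x * y ∈ I := by
  rw [← span_singleton_le_iff_mem, Submodule.le_div_iff_mul_le, span_mul_span,
    Set.singleton_mul_singleton, span_singleton_le_iff_mem]

theorem div_span_singleton {K : Type*} [Field K] [Algebra R K] (I : Submodule R K) {x : K}
    (hx : x ≠ 0) : I / span R {x} = span R {x⁻¹} * I := by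
  ext y
  rw [mem_div_span_singleton, span_singleton_mul, mem_smul_iff_inv_mul_mem (inv_ne_zero hx),
    inv_inv, mul_comm]

theorem fg_one : (1 : Submodule R A).FG := by
  rw [one_eq_span]
  exact fg_span_singleton 1

theorem one_ne_bot [Nontrivial A] : (1 : Submodule R A) ≠ ⊥ :=
  (Submodule.ne_bot_iff _).mpr ⟨1, one_le.mp le_rfl, one_ne_zero⟩

theorem mul_ne_bot [NoZeroDivisors A] {I J : Submodule R A} (hI : I ≠ ⊥) (hJ : J ≠ ⊥) :
    I * J ≠ ⊥ :=
  mul_eq_bot.not.mpr (not_or.mpr ⟨hI, hJ⟩)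

end Submodule

namespace Semistar

variable {D K : Type*} [CommRing D] [Field K] [Algebra D K]

section FractionRing

variable [IsFractionRing D K]

theorem exists_algebraMap_mem {E : Submodule D K} (hE : E ≠ ⊥) :
    ∃ a : D, algebraMap D K a ≠ 0 ∧ algebraMap D K a ∈ E := by
  obtain ⟨e, he, he0⟩ := (Submodule.ne_bot_iff E).mp hE
  obtain ⟨⟨a, b⟩, hab⟩ := IsLocalization.surj (nonZeroDivisors D) e
  refine ⟨a, ?_, ?_⟩
  · rw [← hab]
    exact mul_ne_zero he0 (IsLocalization.map_units K b).ne_zero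
  · rw [← hab, mul_comm, ← Algebra.smul_def]
    exact E.smul_mem _ he

theorem inf_ne_bot {E F : Submodule D K} (hE : E ≠ ⊥) (hF : F ≠ ⊥) : E ⊓ F ≠ ⊥ := by
  obtain ⟨a, ha, haE⟩ := exists_algebraMap_mem hE
  obtain ⟨c, hc, hcF⟩ := exists_algebraMap_mem hF
  refine (Submodule.ne_bot_iff _).mpr
    ⟨algebraMap D K a * algebraMap D K c, ⟨?_, ?_⟩, mul_ne_zero ha hc⟩
  · rw [mul_comm, ← Algebra.smul_def]
    exact E.smul_mem c haE
  · rw [← Algebra.smul_def]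
    exact F.smul_mem a hcF

theorem div_ne_bot {E F : Submodule D K} (hE : E ≠ ⊥) (hF : F.FG) : E / F ≠ ⊥ := by
  obtain ⟨a, ha, haE⟩ := exists_algebraMap_mem hE
  obtain ⟨b, hb, hbF⟩ := FractionalIdeal.isFractional_of_fg (S := nonZeroDivisors D) hF
  refine (Submodule.ne_bot_iff _).mpr ⟨algebraMap D K b * algebraMap D K a, fun f hf => ?_,
    mul_ne_zero (IsLocalization.map_units K ⟨b, hb⟩).ne_zero ha⟩
  obtain ⟨d, hd⟩ := hbF f hf
  rw [mul_right_comm, ← Algebra.smul_def, ← hd, ← Algebra.smul_def]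
  exact E.smul_mem d haE

theorem idealToK_ne_bot {I : Ideal D} (hI : I ≠ ⊥) : (idealToK I : Submodule D K) ≠ ⊥ := by
  obtain ⟨a, ha, ha0⟩ := (Submodule.ne_bot_iff I).mp hI
  refine (Submodule.ne_bot_iff _).mpr ⟨algebraMap D K a, ⟨a, ha, rfl⟩, ?_⟩
  exact (map_ne_zero_iff _ (IsFractionRing.injective D K)).mpr ha0

end FractionRing

theorem idealToK_bot : (idealToK ⊥ : Submodule D K) = ⊥ :=
  map_bot _

theorem idealToK_top : (idealToK ⊤ : Submodule D K) = 1 := by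
  rw [one_eq_range, idealToK, Submodule.map_top]

theorem idealToK_mono {I J : Ideal D} (h : I ≤ J) : (idealToK I : Submodule D K) ≤ idealToK J :=
  map_mono h

theorem idealToK_mul (I J : Ideal D) :
    (idealToK (I * J) : Submodule D K) = idealToK I * idealToK J :=
  Submodule.map_mul I J (Algebra.ofId D K)

theorem idealToK_le_one (I : Ideal D) : (idealToK I : Submodule D K) ≤ 1 := by
  rw [← idealToK_top]
  exact idealToK_mono le_top

theorem exists_idealToK_eq {N : Submodule D K} (hN : N ≤ 1) : ∃ J : Ideal D, idealToK J = N :=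
  ⟨N.comap (Algebra.linearMap D K), map_comap_eq_self (one_eq_range (R := D) (A := K) ▸ hN)⟩

theorem finStar_eq_of_fg {t : Submodule D K → Submodule D K}
    (ht : ∀ A B : Submodule D K, A ≠ ⊥ → B ≠ ⊥ → A ≤ B → t A ≤ t B)
    {E : Submodule D K} (hE : E ≠ ⊥) (hEfg : E.FG) : finStar t E = t E :=
  le_antisymm (iSup₂_le fun F hF => ht F E hF.1 hE hF.2.2)
    (le_biSup t (show E ∈ {F : Submodule D K | F ≠ ⊥ ∧ F.FG ∧ F ≤ E} from
      ⟨hE, hEfg, le_rfl⟩))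

theorem starEq_finStar_iff {t₁ t₂ : Submodule D K → Submodule D K}
    (ht₁ : ∀ A B : Submodule D K, A ≠ ⊥ → B ≠ ⊥ → A ≤ B → t₁ A ≤ t₁ B)
    (ht₂ : ∀ A B : Submodule D K, A ≠ ⊥ → B ≠ ⊥ → A ≤ B → t₂ A ≤ t₂ B) :
    StarEq (finStar t₁) (finStar t₂) ↔
      ∀ E : Submodule D K, E ≠ ⊥ → E.FG → t₁ E = t₂ E := by
  refine ⟨fun h E hE hEfg => ?_, fun h _ _ => biSup_congr fun F hF => h F hF.1 hF.2.1⟩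
  rw [← finStar_eq_of_fg ht₁ hE hEfg, ← finStar_eq_of_fg ht₂ hE hEfg]
  exact h E hE

namespace SemistarOp

variable (s : SemistarOp D K)

theorem star_ne_bot {E : Submodule D K} (hE : E ≠ ⊥) : s.star E ≠ ⊥ :=
  fun h => hE (le_bot_iff.mp (h ▸ s.le_star E hE))

theorem one_mem_star_one : (1 : K) ∈ s.star 1 :=
  s.le_star 1 one_ne_bot (one_le.mp le_rfl)

theorem star_le_of_le_star {A B : Submodule D K} (hA : A ≠ ⊥) (hB : B ≠ ⊥)
    (h : A ≤ s.star B) : s.star A ≤ s.star B :=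
  (s.star_mono _ _ hA (s.star_ne_bot hB) h).trans (s.star_star B hB).le

theorem div_le_star_div_star {E A : Submodule D K} (hE : E ≠ ⊥) (hA : A ≠ ⊥) :
    E / A ≤ s.star E / s.star A := by
  intro x hx
  rcases eq_or_ne x 0 with rfl | hx0
  · exact zero_mem _
  rw [← span_singleton_le_iff_mem, Submodule.le_div_iff_mul_le] at hx ⊢
  rw [← s.star_smul_mul x hx0 A hA]
  exact s.star_mono _ _ (mul_ne_bot (span_singleton_eq_bot.not.mpr hx0) hA) hE hx

theorem star_div_le {E F : Submodule D K} (hE : E ≠ ⊥) (hEF : E / F ≠ ⊥) :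
    s.star (E / F) ≤ s.star E / F := by
  have h := (le_div_div_self E F).trans (s.div_le_star_div_star hE hEF)
  rwa [Submodule.le_div_iff_mul_le, mul_comm, ← Submodule.le_div_iff_mul_le] at h

theorem star_div_span_singleton {E : Submodule D K} (hE : E ≠ ⊥) {x : K} (hx : x ≠ 0) :
    s.star (E / span D {x}) = s.star E / span D {x} := by
  rw [div_span_singleton E hx, div_span_singleton _ hx, s.star_smul_mul _ (inv_ne_zero hx) E hE]

theorem star_eq_star_one_of_one_mem {N : Submodule D K} (hN : N ≠ ⊥) (hN1 : N ≤ 1)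
    (h : (1 : K) ∈ s.star N) : s.star N = s.star 1 :=
  le_antisymm (s.star_mono _ _ hN one_ne_bot hN1)
    (s.star_le_of_le_star one_ne_bot hN (one_le.mpr h))

end SemistarOp

section StarLS

variable (s : SemistarOp D K)

theorem one_mem_star_of_mem_starLS {I : Ideal D} (hI : I ∈ starLS s) :
    (1 : K) ∈ s.star (idealToK I) :=
  hI.2 ▸ s.one_mem_star_one

theorem top_mem_starLS : ⊤ ∈ starLS s :=
  ⟨fun h => one_ne_bot (R := D) (A := K) (by rw [← idealToK_top, h, idealToK_bot]),
    by rw [idealToK_top]⟩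

theorem barStar_mono : Monotone (barStar s) :=
  fun _ _ h => iSup₂_mono fun _ _ => div_le_div_of_le_of_le h le_rfl

variable [IsFractionRing D K]

theorem mul_mem_starLS {I J : Ideal D} (hI : I ∈ starLS s) (hJ : J ∈ starLS s) :
    I * J ∈ starLS s := by
  have hI' := idealToK_ne_bot (K := K) hI.1
  have hJ' := idealToK_ne_bot (K := K) hJ.1
  have hIJ := mul_ne_bot hI' hJ'
  refine ⟨fun h => hIJ (by rw [← idealToK_mul, h, idealToK_bot]), ?_⟩
  rw [idealToK_mul]
  have hle : idealToK I ≤ s.star (idealToK I * idealToK J) / s.star (idealToK J) :=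
    (Submodule.le_div_iff_mul_le.mpr le_rfl).trans (s.div_le_star_div_star hIJ hJ')
  refine le_antisymm (s.star_mono _ _ hIJ one_ne_bot ?_) (hI.2 ▸ s.star_le_of_le_star hI' hIJ ?_)
  · simpa using mul_le_mul' (idealToK_le_one I) (idealToK_le_one (K := K) J)
  · exact fun x hx => by simpa using hle hx 1 (one_mem_star_of_mem_starLS s hJ)

theorem directedOn_div_starLS (E : Submodule D K) :
    DirectedOn (· ≤ ·) ((fun J => E / idealToK J) '' starLS s) := by
  rintro _ ⟨I, hI, rfl⟩ _ ⟨J, hJ, rfl⟩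
  exact ⟨_, ⟨I * J, mul_mem_starLS s hI hJ, rfl⟩,
    div_le_div_of_le_of_le le_rfl (idealToK_mono Ideal.mul_le_left),
    div_le_div_of_le_of_le le_rfl (idealToK_mono Ideal.mul_le_right)⟩

end StarLS

section BarStar

variable (s : SemistarOp D K) [IsFractionRing D K]

theorem exists_starLS_of_fg_le_barStar {E G : Submodule D K} (hG : G.FG)
    (h : G ≤ barStar s E) : ∃ J ∈ starLS s, G ≤ E / idealToK J := by
  rw [barStar, ← sSup_image] at h
  obtain ⟨_, ⟨J, hJ, rfl⟩, hGJ⟩ :=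
    (CompleteLattice.isCompactElement_iff_le_of_directed_sSup_le (α := Submodule D K) G).mp
      ((fg_iff_compact G).mp hG)
      _ ⟨_, Set.mem_image_of_mem _ (top_mem_starLS s)⟩ (directedOn_div_starLS s E) h
  exact ⟨J, hJ, hGJ⟩

theorem mem_barStar_iff {E : Submodule D K} {x : K} :
    x ∈ barStar s E ↔ ∃ J ∈ starLS s, x ∈ E / idealToK J := by
  refine ⟨fun hx => ?_, fun ⟨J, hJ, hx⟩ =>
    (le_biSup (fun J => E / idealToK J) hJ : _ ≤ barStar s E) hx⟩
  simpa only [span_singleton_le_iff_mem] using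
    exists_starLS_of_fg_le_barStar s (fg_span_singleton x) ((span_singleton_le_iff_mem _ _).mpr hx)

theorem barStar_le_star {E : Submodule D K} (hE : E ≠ ⊥) : barStar s E ≤ s.star E :=
  iSup₂_le fun J hJ x hx => by
    simpa using s.div_le_star_div_star hE (idealToK_ne_bot hJ.1) hx 1
      (one_mem_star_of_mem_starLS s hJ)

theorem barStar_inf (E F : Submodule D K) :
    barStar s (E ⊓ F) = barStar s E ⊓ barStar s F := by
  refine le_antisymm (le_inf (barStar_mono s inf_le_left) (barStar_mono s inf_le_right)) ?_
  rintro x ⟨hxE, hxF⟩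
  obtain ⟨I, hI, hxI⟩ := (mem_barStar_iff s).mp hxE
  obtain ⟨J, hJ, hxJ⟩ := (mem_barStar_iff s).mp hxF
  refine (mem_barStar_iff s).mpr ⟨I * J, mul_mem_starLS s hI hJ, fun y hy => ⟨?_, ?_⟩⟩
  · exact hxI y (idealToK_mono Ideal.mul_le_left hy)
  · exact hxJ y (idealToK_mono Ideal.mul_le_right hy)

theorem barStar_div (E : Submodule D K) {F : Submodule D K} (hF : F.FG) :
    barStar s (E / F) = barStar s E / F := by
  refine le_antisymm (iSup₂_le fun J hJ => ?_) fun x hx => ?_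
  · rw [div_div_comm]
    exact div_le_div_of_le_of_le (le_biSup (fun J => E / idealToK J) hJ) le_rfl
  · rw [← span_singleton_le_iff_mem, Submodule.le_div_iff_mul_le] at hx
    obtain ⟨J, hJ, hxJ⟩ := exists_starLS_of_fg_le_barStar s ((fg_span_singleton x).mul hF) hx
    rw [← Submodule.le_div_iff_mul_le, div_div_comm, span_singleton_le_iff_mem] at hxJ
    exact (mem_barStar_iff s).mpr ⟨J, hJ, hxJ⟩

theorem barStar_eq_star_of_star_colon_eq {E : Submodule D K} (hE : E ≠ ⊥)
    (h : ∀ x : K, x ≠ 0 →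
      s.star (E / span D {x} ⊓ 1) = s.star E / span D {x} ⊓ s.star 1) :
    barStar s E = s.star E := by
  refine le_antisymm (barStar_le_star s hE) fun x hx => ?_
  rcases eq_or_ne x 0 with rfl | hx0
  · exact zero_mem _
  have hN : E / span D {x} ⊓ 1 ≠ ⊥ :=
    inf_ne_bot (div_ne_bot hE (fg_span_singleton x)) one_ne_bot
  obtain ⟨J, hJ⟩ := exists_idealToK_eq (inf_le_right : E / span D {x} ⊓ 1 ≤ 1)
  have hJs : J ∈ starLS s := by
    refine ⟨fun hJ0 => hN (by rw [← hJ, hJ0, idealToK_bot]), ?_⟩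
    rw [hJ]
    refine s.star_eq_star_one_of_one_mem hN inf_le_right ?_
    rw [h x hx0]
    exact ⟨mem_div_span_singleton.mpr (by rwa [one_mul]), s.one_mem_star_one⟩
  refine (mem_barStar_iff s).mpr ⟨J, hJs, fun y hy => ?_⟩
  rw [hJ] at hy
  rw [mul_comm]
  exact mem_div_span_singleton.mp hy.1

theorem star_inf_eq_of_barStar_eq {E F : Submodule D K} (hE : E ≠ ⊥) (hF : F ≠ ⊥)
    (hE' : barStar s E = s.star E) (hF' : barStar s F = s.star F) :
    s.star (E ⊓ F) = s.star E ⊓ s.star F := by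
  have hEF := inf_ne_bot hE hF
  refine le_antisymm (le_inf (s.star_mono _ _ hEF hE inf_le_left)
    (s.star_mono _ _ hEF hF inf_le_right)) ?_
  rw [← hE', ← hF', ← barStar_inf]
  exact barStar_le_star s hEF

theorem star_colon_eq_of_barStar_eq {E F : Submodule D K} (hE : E ≠ ⊥) (hF : F.FG)
    (hE' : barStar s E = s.star E) (h1 : barStar s 1 = s.star 1) :
    s.star (E / F ⊓ 1) = s.star E / F ⊓ s.star 1 := by
  have hEF := div_ne_bot hE hF
  have hN := inf_ne_bot hEF one_ne_bot
  refine le_antisymm (le_inf ((s.star_mono _ _ hN hEF inf_le_left).trans (s.star_div_le hE hEF))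
    (s.star_mono _ _ hN one_ne_bot inf_le_right)) ?_
  rw [← hE', ← h1, ← barStar_div s E hF, ← barStar_inf]
  exact barStar_le_star s hN

end BarStar

theorem tfae_finStar_barStar_eq (s : SemistarOp D K) [IsFractionRing D K] :
    List.TFAE [StarEq (finStar (barStar s)) (finStar s.star),
      ∀ E F : Submodule D K, E ≠ ⊥ → E.FG → F ≠ ⊥ → F.FG →
        s.star (E ⊓ F) = s.star E ⊓ s.star F,
      ∀ E F : Submodule D K, E ≠ ⊥ → E.FG → F ≠ ⊥ → F.FG →
        s.star (E / F ⊓ 1) = s.star E / F ⊓ s.star 1,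
      ∀ E : Submodule D K, E ≠ ⊥ → E.FG → ∀ x : K, x ≠ 0 →
        s.star (E / span D {x} ⊓ 1) = s.star E / span D {x} ⊓ s.star 1] := by
  rw [starEq_finStar_iff (fun _ _ _ _ h => barStar_mono s h) s.star_mono]
  tfae_have 1 → 2 := fun h E F hE hEfg hF hFfg =>
    star_inf_eq_of_barStar_eq s hE hF (h E hE hEfg) (h F hF hFfg)
  tfae_have 1 → 3 := fun h E F hE hEfg _ hFfg =>
    star_colon_eq_of_barStar_eq s hE hFfg (h E hE hEfg) (h 1 one_ne_bot fg_one)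
  tfae_have 3 → 4 := fun h E hE hEfg x hx =>
    h E _ hE hEfg (span_singleton_eq_bot.not.mpr hx) (fg_span_singleton x)
  tfae_have 2 → 4 := fun h E hE hEfg x hx => by
    have hEx : (E / span D {x}).FG := by
      rw [div_span_singleton E hx]
      exact (fg_span_singleton _).mul hEfg
    rw [h _ 1 (div_ne_bot hE (fg_span_singleton x)) hEx one_ne_bot fg_one,
      s.star_div_span_singleton hE hx]
  tfae_have 4 → 1 := fun h E hE hEfg => barStar_eq_star_of_star_colon_eq s hE (h E hE hEfg)
  tfae_finish

theorem tfae_barStar_eq (s : SemistarOp D K) [IsFractionRing D K] :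
    List.TFAE [StarEq (barStar s) s.star,
      ∀ E F : Submodule D K, E ≠ ⊥ → F ≠ ⊥ → s.star (E ⊓ F) = s.star E ⊓ s.star F,
      ∀ E : Submodule D K, E ≠ ⊥ → ∀ F : Submodule D K, F ≠ ⊥ → F.FG →
        s.star (E / F ⊓ 1) = s.star E / F ⊓ s.star 1,
      ∀ E : Submodule D K, E ≠ ⊥ → ∀ x : K, x ≠ 0 →
        s.star (E / span D {x} ⊓ 1) = s.star E / span D {x} ⊓ s.star 1] := by
  tfae_have 1 → 2 := fun h E F hE hF => star_inf_eq_of_barStar_eq s hE hF (h E hE) (h F hF)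
  tfae_have 1 → 3 := fun h E hE _ _ hFfg =>
    star_colon_eq_of_barStar_eq s hE hFfg (h E hE) (h 1 one_ne_bot)
  tfae_have 3 → 4 := fun h E hE x hx =>
    h E hE _ (span_singleton_eq_bot.not.mpr hx) (fg_span_singleton x)
  tfae_have 2 → 4 := fun h E hE x hx => by
    rw [h _ 1 (div_ne_bot hE (fg_span_singleton x)) one_ne_bot, s.star_div_span_singleton hE hx]
  tfae_have 4 → 1 := fun h E hE => barStar_eq_star_of_star_colon_eq s hE (h E hE)
  tfae_finish

theorem statement7_general {D K : Type*} [CommRing D] [Field K] [Algebra D K]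
    [IsFractionRing D K] (s : SemistarOp D K) :
    ((StarEq (finStar (barStar s)) (finStar s.star) ↔
        ∀ E F : Submodule D K, E ≠ ⊥ → E.FG → F ≠ ⊥ → F.FG →
          s.star (E ⊓ F) = s.star E ⊓ s.star F) ∧
      ((∀ E F : Submodule D K, E ≠ ⊥ → E.FG → F ≠ ⊥ → F.FG →
          s.star (E ⊓ F) = s.star E ⊓ s.star F) ↔
        ∀ E F : Submodule D K, E ≠ ⊥ → E.FG → F ≠ ⊥ → F.FG →
          s.star (E / F ⊓ 1) = (s.star E / F) ⊓ s.star 1) ∧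
      ((∀ E F : Submodule D K, E ≠ ⊥ → E.FG → F ≠ ⊥ → F.FG →
          s.star (E / F ⊓ 1) = (s.star E / F) ⊓ s.star 1) ↔
        ∀ E : Submodule D K, E ≠ ⊥ → E.FG → ∀ x : K, x ≠ 0 →
          s.star (E / span D {x} ⊓ 1) = (s.star E / span D {x}) ⊓ s.star 1)) ∧
    ((StarEq (barStar s) s.star ↔
        ∀ E F : Submodule D K, E ≠ ⊥ → F ≠ ⊥ →
          s.star (E ⊓ F) = s.star E ⊓ s.star F) ∧
      ((∀ E F : Submodule D K, E ≠ ⊥ → F ≠ ⊥ →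
          s.star (E ⊓ F) = s.star E ⊓ s.star F) ↔
        ∀ E : Submodule D K, E ≠ ⊥ → ∀ F : Submodule D K, F ≠ ⊥ → F.FG →
          s.star (E / F ⊓ 1) = (s.star E / F) ⊓ s.star 1) ∧
      ((∀ E : Submodule D K, E ≠ ⊥ → ∀ F : Submodule D K, F ≠ ⊥ → F.FG →
          s.star (E / F ⊓ 1) = (s.star E / F) ⊓ s.star 1) ↔
        ∀ E : Submodule D K, E ≠ ⊥ → ∀ x : K, x ≠ 0 →
          s.star (E / span D {x} ⊓ 1) = (s.star E / span D {x}) ⊓ s.star 1)) := by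
  have hf := tfae_finStar_barStar_eq s
  have h := tfae_barStar_eq s
  exact ⟨⟨hf.out 0 1, hf.out 1 2, hf.out 2 3⟩, h.out 0 1, h.out 1 2, h.out 2 3⟩

theorem statement7 {D K : Type*} [CommRing D] [IsDomain D] [Field K] [Algebra D K]
    [IsFractionRing D K] (s : SemistarOp D K) :
    ((StarEq (finStar (barStar s)) (finStar s.star) ↔
        ∀ E F : Submodule D K, E ≠ ⊥ → E.FG → F ≠ ⊥ → F.FG →
          s.star (E ⊓ F) = s.star E ⊓ s.star F) ∧
      ((∀ E F : Submodule D K, E ≠ ⊥ → E.FG → F ≠ ⊥ → F.FG →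
          s.star (E ⊓ F) = s.star E ⊓ s.star F) ↔
        ∀ E F : Submodule D K, E ≠ ⊥ → E.FG → F ≠ ⊥ → F.FG →
          s.star (E / F ⊓ 1) = (s.star E / F) ⊓ s.star 1) ∧
      ((∀ E F : Submodule D K, E ≠ ⊥ → E.FG → F ≠ ⊥ → F.FG →
          s.star (E / F ⊓ 1) = (s.star E / F) ⊓ s.star 1) ↔
        ∀ E : Submodule D K, E ≠ ⊥ → E.FG → ∀ x : K, x ≠ 0 →
          s.star (E / span D {x} ⊓ 1) = (s.star E / span D {x}) ⊓ s.star 1)) ∧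
    ((StarEq (barStar s) s.star ↔
        ∀ E F : Submodule D K, E ≠ ⊥ → F ≠ ⊥ →
          s.star (E ⊓ F) = s.star E ⊓ s.star F) ∧
      ((∀ E F : Submodule D K, E ≠ ⊥ → F ≠ ⊥ →
          s.star (E ⊓ F) = s.star E ⊓ s.star F) ↔
        ∀ E : Submodule D K, E ≠ ⊥ → ∀ F : Submodule D K, F ≠ ⊥ → F.FG →
          s.star (E / F ⊓ 1) = (s.star E / F) ⊓ s.star 1) ∧
      ((∀ E : Submodule D K, E ≠ ⊥ → ∀ F : Submodule D K, F ≠ ⊥ → F.FG →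
          s.star (E / F ⊓ 1) = (s.star E / F) ⊓ s.star 1) ↔
        ∀ E : Submodule D K, E ≠ ⊥ → ∀ x : K, x ≠ 0 →
          s.star (E / span D {x} ⊓ 1) = (s.star E / span D {x}) ⊓ s.star 1)) :=
  statement7_general s

end Semistar
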